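/- Let s ∈ K²\{0} and let ξ ∈ M_{2×4}(K) have rank 2, and set φ = σ₁(s,ξ) ∈ Z₁ \ Z₂. Then the subspace 𝒢_φ = {ψ ∈ M₄(K) : (φw)₃(ψw)₀ − (φw)₂(ψw)₁ − (φw)₁(ψw)₂ + (φw)₀(ψw)₃ = 0 for all w ∈ K⁴} equals the tangent space {σ₁(s,t) + σ₁(s',ξ) : t ∈ M_{2×4}(K), s' ∈ K²} to Z₁ at φ; in particular it has dimension 9 over K. (The analogous statement holds for σ₂ and Z₂.) Consequently the base scheme of the rational map induced by Q is reduced away from Z₁ ∩ Z₂. -/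

import Mathlib

/-!
Writing `x = ξ w`, the condition defining `𝒢_φ` at `φ = σ₁(s, ξ)` reads
`x₀ · b(w) + x₁ · a(w) = 0` for the linear forms `a = s₁ψ₀ - s₀ψ₂` and `b = s₀ψ₃ - s₁ψ₁`
built from the rows of `ψ`. As `ξ` has rank 2, `x₀` and `x₁` are independent linear forms, and
polarizing the identity forces `a = -α x₀`, `b = α x₁`; these relations say exactly that
`ψ = σ₁(s, t) + σ₁(s', ξ)`. The map `(t, s') ↦ σ₁(s, t) + σ₁(s', ξ)` has the one-dimensional
kernel spanned by `(-ξ, s)`, so its image has dimension `10 - 1 = 9`. Exchanging the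
coordinates `x₁, x₂` preserves `Q` and turns `σ₁` into `σ₂`, which gives the second half.
-/

variable {K : Type*} [Field K]

/-- The Segre embedding `σ₁`: rows `(s₀t⁰, s₀t¹, s₁t⁰, s₁t¹)`. -/
def segre1 (s : Fin 2 → K) (t : Matrix (Fin 2) (Fin 4) K) :
    Matrix (Fin 4) (Fin 4) K :=
  Matrix.of fun i j => s (![0, 0, 1, 1] i) * t (![0, 1, 0, 1] i) j

/-- The Segre embedding `σ₂`: rows `(s₀t⁰, s₁t⁰, s₀t¹, s₁t¹)`. -/
def segre2 (s : Fin 2 → K) (t : Matrix (Fin 2) (Fin 4) K) :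
    Matrix (Fin 4) (Fin 4) K :=
  Matrix.of fun i j => s (![0, 1, 0, 1] i) * t (![0, 0, 1, 1] i) j

/-- The intersection `𝒢_φ` of the tangent spaces at `φ` to all point conditions of
the quadric `Q = V(x₀x₃ - x₁x₂)`. -/
def Gfiber (φ : Matrix (Fin 4) (Fin 4) K) : Set (Matrix (Fin 4) (Fin 4) K) :=
  {ψ | ∀ w : Fin 4 → K,
    φ.mulVec w 3 * ψ.mulVec w 0 - φ.mulVec w 2 * ψ.mulVec w 1
      - φ.mulVec w 1 * ψ.mulVec w 2 + φ.mulVec w 0 * ψ.mulVec w 3 = 0}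

open Matrix

theorem LinearMap.exists_eq_smul_of_forall_mul_add_mul_eq_zero {R V : Type*} [CommRing R]
    [AddCommGroup V] [Module R V] {f g u v : V →ₗ[R] R} (hfg : Function.Surjective (f.prod g))
    (h : ∀ w, f w * u w + g w * v w = 0) : ∃ α : R, u = α • g ∧ v = -α • f := by
  obtain ⟨w₁, hw₁⟩ := hfg (1, 0)
  obtain ⟨w₂, hw₂⟩ := hfg (0, 1)
  have hf₁ : f w₁ = 1 := congrArg Prod.fst hw₁
  have hg₁ : g w₁ = 0 := congrArg Prod.snd hw₁
  have hf₂ : f w₂ = 0 := congrArg Prod.fst hw₂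
  have hg₂ : g w₂ = 1 := congrArg Prod.snd hw₂
  have polar : ∀ w w', f w * u w' + f w' * u w + g w * v w' + g w' * v w = 0 := fun w w' => by
    have := h (w + w')
    simp only [map_add] at this
    linear_combination this - h w - h w'
  have hu₁ := h w₁
  have hv₂ := h w₂
  have h₁₂ := polar w₁ w₂
  have hpol₁ := polar w₁
  have hpol₂ := polar w₂
  simp only [hf₁, hg₁, hf₂, hg₂] at hu₁ hv₂ h₁₂ hpol₁ hpol₂
  refine ⟨u w₂, LinearMap.ext fun w => ?_, LinearMap.ext fun w => ?_⟩
  · simp only [LinearMap.smul_apply, smul_eq_mul]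
    linear_combination hpol₁ w - f w * hu₁ - g w * h₁₂
  · simp only [LinearMap.smul_apply, smul_eq_mul]
    linear_combination hpol₂ w - g w * hv₂

theorem exists_smul_eq_of_forall_smul_add_smul_eq_zero {ι κ M : Type*} [AddCommGroup M]
    [Module K M] {s s' : ι → K} {t ξ : κ → M} (hs : s ≠ 0) (hξ : ξ ≠ 0)
    (h : ∀ i j, s i • t j + s' i • ξ j = 0) : ∃ c : K, t = -c • ξ ∧ s' = c • s := by
  obtain ⟨i, hi⟩ : ∃ i, s i ≠ 0 := Function.ne_iff.1 hs
  obtain ⟨j, hj⟩ : ∃ j, ξ j ≠ 0 := Function.ne_iff.1 hξ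
  have ht : t = -(s' i / s i) • ξ := funext fun j' => smul_right_injective M hi <| by
    simp only [Pi.smul_apply, smul_smul, mul_neg, mul_div_cancel₀ _ hi]
    linear_combination (norm := module) h i j'
  refine ⟨s' i / s i, ht, funext fun i' => ?_⟩
  have := h i' j
  rw [ht, Pi.smul_apply, smul_smul, ← add_smul, smul_eq_zero] at this
  simp only [Pi.smul_apply, smul_eq_mul]
  linear_combination this.resolve_right hj

theorem Matrix.mulVec_surjective_of_rank_eq_card {m n : Type*} [Fintype m] [Fintype n]
    {A : Matrix m n K} (hA : A.rank = Fintype.card m) :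
    Function.Surjective A.mulVec := by
  have : LinearMap.range A.mulVecLin = ⊤ :=
    Submodule.eq_top_of_finrank_eq (by rw [← Matrix.rank, hA, Module.finrank_fintype_fun_eq_card])
  exact LinearMap.range_eq_top.1 this

theorem exists_dotProduct_eq_one {ι : Type*} [Fintype ι] [DecidableEq ι] {s : ι → K}
    (hs : s ≠ 0) : ∃ l : ι → K, l ⬝ᵥ s = 1 := by
  obtain ⟨i, hi⟩ : ∃ i, s i ≠ 0 := Function.ne_iff.1 hs
  exact ⟨Pi.single i (s i)⁻¹, by simp [hi]⟩

section Tangent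

variable {R V W U : Type*} [CommSemiring R] [AddCommMonoid V] [AddCommMonoid W]
  [AddCommMonoid U] [Module R V] [Module R W] [Module R U]

/-- The differential of `(s, t) ↦ β s t` at `(s, ξ)`, taking the increments in the order
`(t, s')`. -/
def LinearMap.tangentMap (β : V →ₗ[R] W →ₗ[R] U) (s : V) (ξ : W) : W × V →ₗ[R] U :=
  (β s).coprod (β.flip ξ)

@[simp]
theorem LinearMap.tangentMap_apply (β : V →ₗ[R] W →ₗ[R] U) (s : V) (ξ : W) (t : W) (s' : V) :
    β.tangentMap s ξ (t, s') = β s t + β s' ξ :=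
  rfl

theorem LinearMap.coe_range_tangentMap (β : V →ₗ[R] W →ₗ[R] U) (s : V) (ξ : W) :
    (LinearMap.range (β.tangentMap s ξ) : Set U) = {χ | ∃ t s', χ = β s t + β s' ξ} := by
  ext χ
  simp [eq_comm]

theorem LinearMap.tangentMap_compr₂ {U' : Type*} [AddCommMonoid U'] [Module R U']
    (β : V →ₗ[R] W →ₗ[R] U) (e : U →ₗ[R] U') (s : V) (ξ : W) :
    (β.compr₂ e).tangentMap s ξ = e ∘ₗ β.tangentMap s ξ := by
  ext <;> simp

end Tangent

def segre1Bilin : (Fin 2 → K) →ₗ[K] Matrix (Fin 2) (Fin 4) K →ₗ[K] Matrix (Fin 4) (Fin 4) K :=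
  LinearMap.mk₂ K segre1
    (fun _ _ _ => by ext; simp [segre1, add_mul])
    (fun _ _ _ => by ext; simp [segre1, mul_assoc])
    (fun _ _ _ => by ext; simp [segre1, mul_add])
    (fun _ _ _ => by ext; simp [segre1, mul_left_comm])

@[simp]
theorem segre1Bilin_apply (s : Fin 2 → K) (t : Matrix (Fin 2) (Fin 4) K) :
    segre1Bilin s t = segre1 s t :=
  rfl

theorem segre1_finProdFinEquiv (s : Fin 2 → K) (t : Matrix (Fin 2) (Fin 4) K) (i j : Fin 2) :
    segre1 s t (finProdFinEquiv (i, j)) = s i • t j := by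
  fin_cases i <;> fin_cases j <;> rfl

theorem ker_tangentMap_segre1Bilin {s : Fin 2 → K} {ξ : Matrix (Fin 2) (Fin 4) K} (hs : s ≠ 0)
    (hξ : ξ ≠ 0) : LinearMap.ker (segre1Bilin.tangentMap s ξ) = K ∙ (-ξ, s) := by
  ext ⟨t, s'⟩
  simp only [LinearMap.mem_ker, Submodule.mem_span_singleton, LinearMap.tangentMap_apply,
    segre1Bilin_apply]
  constructor
  · intro h
    obtain ⟨c, rfl, rfl⟩ := exists_smul_eq_of_forall_smul_add_smul_eq_zero (t := t) (s' := s')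
      hs hξ fun i j => by
        have hij : segre1 s t (finProdFinEquiv (i, j))
            + segre1 s' ξ (finProdFinEquiv (i, j)) = 0 := congrFun h _
        rwa [segre1_finProdFinEquiv, segre1_finProdFinEquiv] at hij
    exact ⟨c, Prod.ext ((smul_neg c ξ).trans (neg_smul c ξ).symm) rfl⟩
  · rintro ⟨c, hc⟩
    simp only [Prod.smul_mk, Prod.mk.injEq] at hc
    rw [← hc.1, ← hc.2, ← segre1Bilin_apply, ← segre1Bilin_apply, map_smul, map_neg, map_smul]
    simp

theorem finrank_range_tangentMap_segre1Bilin {s : Fin 2 → K} {ξ : Matrix (Fin 2) (Fin 4) K}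
    (hs : s ≠ 0) (hξ : ξ ≠ 0) :
    Module.finrank K (LinearMap.range (segre1Bilin.tangentMap s ξ)) = 9 := by
  have hker : Module.finrank K (LinearMap.ker (segre1Bilin.tangentMap s ξ)) = 1 := by
    rw [ker_tangentMap_segre1Bilin hs hξ]
    exact finrank_span_singleton fun h => hs (congrArg Prod.snd h)
  have := (segre1Bilin.tangentMap s ξ).finrank_range_add_finrank_ker
  simp only [hker, Module.finrank_prod, Module.finrank_matrix, Module.finrank_fin_fun,
    Module.finrank_self, Fintype.card_fin] at this
  omega

theorem segre1_mulVec (s : Fin 2 → K) (t : Matrix (Fin 2) (Fin 4) K) (w : Fin 4 → K) :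
    segre1 s t *ᵥ w =
      ![s 0 * (t *ᵥ w) 0, s 0 * (t *ᵥ w) 1, s 1 * (t *ᵥ w) 0, s 1 * (t *ᵥ w) 1] := by
  ext i
  fin_cases i <;> simp [segre1, mulVec, dotProduct, Finset.mul_sum, mul_assoc]

theorem mem_gfiber_segre1_iff {s : Fin 2 → K} {ξ : Matrix (Fin 2) (Fin 4) K}
    {ψ : Matrix (Fin 4) (Fin 4) K} :
    ψ ∈ Gfiber (segre1 s ξ) ↔ ∀ w, (ξ *ᵥ w) 0 * (s 0 * (ψ *ᵥ w) 3 - s 1 * (ψ *ᵥ w) 1)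
      + (ξ *ᵥ w) 1 * (s 1 * (ψ *ᵥ w) 0 - s 0 * (ψ *ᵥ w) 2) = 0 := by
  refine forall_congr' fun w => ?_
  simp only [segre1_mulVec, Matrix.cons_val]
  constructor <;> intro h <;> linear_combination h

theorem exists_eq_of_mem_gfiber_segre1 {s : Fin 2 → K} {ξ : Matrix (Fin 2) (Fin 4) K}
    (hs : s ≠ 0) (hξ : Function.Surjective ξ.mulVec) {ψ : Matrix (Fin 4) (Fin 4) K}
    (hψ : ψ ∈ Gfiber (segre1 s ξ)) : ∃ t s', ψ = segre1 s t + segre1 s' ξ := by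
  let f : (Fin 4 → K) →ₗ[K] K := LinearMap.proj 0 ∘ₗ ξ.mulVecLin
  let g : (Fin 4 → K) →ₗ[K] K := LinearMap.proj 1 ∘ₗ ξ.mulVecLin
  let ψrow (i : Fin 4) : (Fin 4 → K) →ₗ[K] K := LinearMap.proj i ∘ₗ ψ.mulVecLin
  have hfg : Function.Surjective (f.prod g) := fun x => by
    obtain ⟨w, hw⟩ := hξ ![x.1, x.2]
    exact ⟨w, by simp [f, g, hw]⟩
  obtain ⟨α, hu, hv⟩ := LinearMap.exists_eq_smul_of_forall_mul_add_mul_eq_zero hfg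
    (u := s 0 • ψrow 3 - s 1 • ψrow 1) (v := s 1 • ψrow 0 - s 0 • ψrow 2)
    (by simpa [f, g, ψrow] using mem_gfiber_segre1_iff.1 hψ)
  have hu' (k : Fin 4) : s 0 * ψ 3 k - s 1 * ψ 1 k = α * ξ 1 k := by
    simpa [g, ψrow, mulVec_single_one] using LinearMap.congr_fun hu (Pi.single k 1)
  have hv' (k : Fin 4) : s 1 * ψ 0 k - s 0 * ψ 2 k = -α * ξ 0 k := by
    simpa [f, ψrow, mulVec_single_one] using LinearMap.congr_fun hv (Pi.single k 1)
  -- With `l ⬝ᵥ s = 1`, each pair of rows `(ψ₀, ψ₂)`, `(ψ₁, ψ₃)` splits as `s` times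
  -- `l₀ψᵢ + l₁ψⱼ` plus a multiple of a row of `ξ`.
  obtain ⟨l, hl⟩ := exists_dotProduct_eq_one hs
  simp only [dotProduct, Fin.sum_univ_two] at hl
  refine ⟨of ![l 0 • ψ 0 + l 1 • ψ 2, l 0 • ψ 1 + l 1 • ψ 3], α • ![-l 1, l 0], ?_⟩
  ext i k
  fin_cases i <;> simp only [Fin.zero_eta, Fin.mk_one, Fin.reduceFinMk, segre1, Matrix.add_apply,
    of_apply, cons_val, Pi.add_apply, Pi.smul_apply, smul_eq_mul]
  · linear_combination l 1 * hv' k - ψ 0 k * hl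
  · linear_combination -l 1 * hu' k - ψ 1 k * hl
  · linear_combination -l 0 * hv' k - ψ 2 k * hl
  · linear_combination l 0 * hu' k - ψ 3 k * hl

theorem gfiber_segre1 {s : Fin 2 → K} {ξ : Matrix (Fin 2) (Fin 4) K} (hs : s ≠ 0)
    (hξ : Function.Surjective ξ.mulVec) :
    Gfiber (segre1 s ξ) = LinearMap.range (segre1Bilin.tangentMap s ξ) := by
  rw [LinearMap.coe_range_tangentMap]
  ext ψ
  refine ⟨exists_eq_of_mem_gfiber_segre1 hs hξ, ?_⟩
  rintro ⟨t, s', rfl⟩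
  refine mem_gfiber_segre1_iff.2 fun w => ?_
  simp only [segre1Bilin_apply, add_mulVec, segre1_mulVec, Pi.add_apply, cons_val]
  ring

def swapRows12 : Matrix (Fin 4) (Fin 4) K ≃ₗ[K] Matrix (Fin 4) (Fin 4) K :=
  reindexLinearEquiv K K (Equiv.swap 1 2) (Equiv.refl _)

theorem segre2_eq_swapRows12 (s : Fin 2 → K) (t : Matrix (Fin 2) (Fin 4) K) :
    segre2 s t = swapRows12 (segre1 s t) := by
  ext i j
  fin_cases i <;> rfl

theorem swapRows12_symm : (swapRows12 : Matrix (Fin 4) (Fin 4) K ≃ₗ[K] _).symm = swapRows12 :=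
  LinearEquiv.ext fun A => by ext i j; fin_cases i <;> rfl

theorem swapRows12_mulVec (A : Matrix (Fin 4) (Fin 4) K) (w : Fin 4 → K) :
    swapRows12 A *ᵥ w = ![(A *ᵥ w) 0, (A *ᵥ w) 2, (A *ᵥ w) 1, (A *ᵥ w) 3] := by
  ext i
  fin_cases i <;> rfl

theorem gfiber_swapRows12 (φ : Matrix (Fin 4) (Fin 4) K) :
    Gfiber (swapRows12 φ) = swapRows12 '' Gfiber φ := by
  rw [LinearEquiv.image_eq_preimage_symm, swapRows12_symm]
  ext ψ
  refine forall_congr' fun w => ?_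
  simp only [swapRows12_mulVec, Matrix.cons_val]
  constructor <;> intro h <;> linear_combination h

def segre2Bilin : (Fin 2 → K) →ₗ[K] Matrix (Fin 2) (Fin 4) K →ₗ[K] Matrix (Fin 4) (Fin 4) K :=
  segre1Bilin.compr₂ swapRows12.toLinearMap

@[simp]
theorem segre2Bilin_apply (s : Fin 2 → K) (t : Matrix (Fin 2) (Fin 4) K) :
    segre2Bilin s t = segre2 s t :=
  (segre2_eq_swapRows12 s t).symm

theorem range_tangentMap_segre2Bilin (s : Fin 2 → K) (ξ : Matrix (Fin 2) (Fin 4) K) :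
    LinearMap.range (segre2Bilin.tangentMap s ξ) =
      (LinearMap.range (segre1Bilin.tangentMap s ξ)).map swapRows12.toLinearMap := by
  rw [segre2Bilin, LinearMap.tangentMap_compr₂, LinearMap.range_comp]

theorem gfiber_segre2 {s : Fin 2 → K} {ξ : Matrix (Fin 2) (Fin 4) K} (hs : s ≠ 0)
    (hξ : Function.Surjective ξ.mulVec) :
    Gfiber (segre2 s ξ) = LinearMap.range (segre2Bilin.tangentMap s ξ) := by
  rw [segre2_eq_swapRows12, gfiber_swapRows12, gfiber_segre1 hs hξ,
    range_tangentMap_segre2Bilin, Submodule.map_coe]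
  rfl

theorem finrank_range_tangentMap_segre2Bilin {s : Fin 2 → K} {ξ : Matrix (Fin 2) (Fin 4) K}
    (hs : s ≠ 0) (hξ : ξ ≠ 0) :
    Module.finrank K (LinearMap.range (segre2Bilin.tangentMap s ξ)) = 9 := by
  rw [range_tangentMap_segre2Bilin, LinearEquiv.finrank_map_eq,
    finrank_range_tangentMap_segre1Bilin hs hξ]

theorem base_scheme_reduced_away_general
    (s : Fin 2 → K) (ξ : Matrix (Fin 2) (Fin 4) K)
    (hs : s ≠ 0) (hξ : ξ.rank = 2) :
    (Gfiber (segre1 s ξ)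
        = {χ : Matrix (Fin 4) (Fin 4) K |
            ∃ (t : Matrix (Fin 2) (Fin 4) K) (s' : Fin 2 → K),
              χ = segre1 s t + segre1 s' ξ} ∧
      Module.finrank K ↥(Submodule.span K (Gfiber (segre1 s ξ))) = 9) ∧
    (Gfiber (segre2 s ξ)
        = {χ : Matrix (Fin 4) (Fin 4) K |
            ∃ (t : Matrix (Fin 2) (Fin 4) K) (s' : Fin 2 → K),
              χ = segre2 s t + segre2 s' ξ} ∧
      Module.finrank K ↥(Submodule.span K (Gfiber (segre2 s ξ))) = 9) := by
  have hsurj : Function.Surjective ξ.mulVec :=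
    mulVec_surjective_of_rank_eq_card (by rw [hξ, Fintype.card_fin])
  have hξ₀ : ξ ≠ 0 := by
    rintro rfl
    simp at hξ
  rw [gfiber_segre1 hs hsurj, gfiber_segre2 hs hsurj, Submodule.span_eq, Submodule.span_eq,
    LinearMap.coe_range_tangentMap, LinearMap.coe_range_tangentMap,
    finrank_range_tangentMap_segre1Bilin hs hξ₀, finrank_range_tangentMap_segre2Bilin hs hξ₀]
  simp only [segre1Bilin_apply, segre2Bilin_apply, and_self]

/-- Away from `Z₁ ∩ Z₂`, i.e. at `φ = σ₁(s,ξ)` with `ξ` of rank 2, the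
intersection `𝒢_φ` of the tangent spaces to all point conditions equals the
tangent space to `Z₁` at `φ`, of dimension 9; analogously for `σ₂` and `Z₂`.
Hence the base scheme is reduced away from `Z₁ ∩ Z₂`. -/
theorem base_scheme_reduced_away [IsAlgClosed K] [CharZero K]
    (s : Fin 2 → K) (ξ : Matrix (Fin 2) (Fin 4) K)
    (hs : s ≠ 0) (hξ : ξ.rank = 2) :
    (Gfiber (segre1 s ξ)
        = {χ : Matrix (Fin 4) (Fin 4) K |
            ∃ (t : Matrix (Fin 2) (Fin 4) K) (s' : Fin 2 → K),
              χ = segre1 s t + segre1 s' ξ} ∧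
      Module.finrank K ↥(Submodule.span K (Gfiber (segre1 s ξ))) = 9) ∧
    (Gfiber (segre2 s ξ)
        = {χ : Matrix (Fin 4) (Fin 4) K |
            ∃ (t : Matrix (Fin 2) (Fin 4) K) (s' : Fin 2 → K),
              χ = segre2 s t + segre2 s' ξ} ∧
      Module.finrank K ↥(Submodule.span K (Gfiber (segre2 s ξ))) = 9) :=
  base_scheme_reduced_away_general s ξ hs hξ
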